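/- arXiv:2510.01488 — 2 statements merged into one kernel-verified Lean document; each statement's English description precedes it below -/
import Mathlib

section
/- Let R be a commutative ring and let F ∈ R⟦x,y⟧ be a formal power series in two variables with zero constant coefficient, with the coefficients of x and of y both equal to 1, and with F(x,0) = x and F(0,y) = y. Let g, h ∈ R⟦z⟧ have zero constant coefficients, suppose the coefficient of z in g is 1, and suppose g(h(z)) = z and h(g(z)) = z (composition of power series). Define G(x,y) = g(F(h(x), h(y))) ∈ R⟦x,y⟧. Then the coefficient of x·y in G equals the coefficient of x·y in F plus 2 times the coefficient of z² in g. -/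
/-- Substitution of (multivariate) formal power series: for `a : σ → MvPowerSeries τ R`
(each entry having zero constant coefficient) and `f ∈ R⟦xₛ : s ∈ σ⟧`, the coefficient
of the monomial `d` in `f(a)` is the (finite) sum over exponents `e` of
`(coeff of e in f) * (coeff of d in ∏ₛ (a s)^(e s))`. -/
noncomputable def MvPowerSeries.substitute {σ τ R : Type*} [CommRing R]
    (a : σ → MvPowerSeries τ R) (f : MvPowerSeries σ R) : MvPowerSeries τ R :=
  fun d => ∑ᶠ e : σ →₀ ℕ, MvPowerSeries.coeff e f *
    MvPowerSeries.coeff d (e.prod fun s n => a s ^ n)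

/-- Substitution of a one-variable formal power series `g ∈ R⟦z⟧` at a
(multivariate) power series `s`, i.e. `g(s)`. -/
noncomputable def PowerSeries.substitute {τ R : Type*} [CommRing R]
    (s : MvPowerSeries τ R) (g : PowerSeries R) : MvPowerSeries τ R :=
  MvPowerSeries.substitute (fun _ : Unit => s) g

open MvPowerSeries PowerSeries

/-! Comparing linear coefficients in `g(h(z)) = z` gives `h(z) = z + O(z²)`. Then in
`h(x)^a h(y)^b` the coefficient of a square-free monomial `x^i y^j` (`i, j ≤ 1`) is
`δ_{ia} δ_{jb}`, so `S = F(h(x), h(y))` has the same coefficients as `F` at `1, x, y, xy`.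
Finally the `xy`-coefficient of `g(S) = g₁S + g₂S² + O(S³)` is `S_xy + 2 g₂ S_x S_y`. -/

namespace MvPowerSeries

variable {σ τ R : Type*} [CommRing R]

theorem substitute_eq_subst {a : σ → MvPowerSeries τ R} (ha : HasSubst a)
    (f : MvPowerSeries σ R) : substitute a f = subst a f := by
  ext d
  rw [coeff_subst ha]
  rfl

theorem coeff_single_add_single_mul (A B : MvPowerSeries (Fin 2) R) :
    coeff (Finsupp.single 0 1 + Finsupp.single 1 1) (A * B) =
      coeff 0 A * coeff (Finsupp.single 0 1 + Finsupp.single 1 1) B +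
        coeff (Finsupp.single 0 1) A * coeff (Finsupp.single 1 1) B +
        coeff (Finsupp.single 1 1) A * coeff (Finsupp.single 0 1) B +
        coeff (Finsupp.single 0 1 + Finsupp.single 1 1) A * coeff 0 B := by
  have hanti : Finset.HasAntidiagonal.antidiagonal
      (Finsupp.single (0 : Fin 2) 1 + Finsupp.single 1 1) =
        {(0, Finsupp.single 0 1 + Finsupp.single 1 1),
          (Finsupp.single 0 1, Finsupp.single 1 1), (Finsupp.single 1 1, Finsupp.single 0 1),
          (Finsupp.single 0 1 + Finsupp.single 1 1, 0)} := by
    ext ⟨u, v⟩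
    simp only [Finset.HasAntidiagonal.mem_antidiagonal, Finsupp.ext_iff, Finsupp.coe_add,
      Pi.add_apply, Finsupp.single_apply, Fin.forall_fin_two, ↓reduceIte, one_ne_zero, add_zero,
      zero_ne_one, zero_add, Finset.mem_insert, Prod.mk.injEq, Finsupp.coe_zero, Pi.zero_apply,
      Finset.mem_singleton]
    omega
  rw [coeff_mul, hanti, Finset.sum_insert, Finset.sum_insert, Finset.sum_insert,
    Finset.sum_singleton, add_assoc, add_assoc]
  all_goals simp [Finsupp.ext_iff, Fin.forall_fin_two]

end MvPowerSeries

namespace PowerSeries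

variable {τ R : Type*} [CommRing R]

theorem substitute_eq_subst {s : MvPowerSeries τ R} (hs : MvPowerSeries.constantCoeff s = 0)
    (g : R⟦X⟧) : g.substitute s = g.subst s :=
  MvPowerSeries.substitute_eq_subst (HasSubst.of_constantCoeff_zero hs).const g

theorem hasSubst_subst_X {σ : Type*} [Finite σ] {h : R⟦X⟧} (h0 : constantCoeff h = 0) :
    MvPowerSeries.HasSubst fun i : σ => h.subst (MvPowerSeries.X (R := R) i) :=
  MvPowerSeries.hasSubst_of_constantCoeff_zero fun i =>
    constantCoeff_subst_eq_zero (MvPowerSeries.constantCoeff_X i) h h0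

theorem substitute_substitute_X_eq_subst (F : MvPowerSeries (Fin 2) R) {h : R⟦X⟧}
    (h0 : constantCoeff h = 0) :
    MvPowerSeries.substitute
        ![h.substitute (MvPowerSeries.X 0), h.substitute (MvPowerSeries.X 1)] F =
      MvPowerSeries.subst (fun i => h.subst (MvPowerSeries.X i)) F := by
  rw [substitute_eq_subst (MvPowerSeries.constantCoeff_X 0),
    substitute_eq_subst (MvPowerSeries.constantCoeff_X 1),
    show ![h.subst (MvPowerSeries.X 0), h.subst (MvPowerSeries.X 1)] =
      fun i : Fin 2 => h.subst (MvPowerSeries.X (R := R) i) from by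
        ext1 i; fin_cases i <;> rfl,
    MvPowerSeries.substitute_eq_subst (hasSubst_subst_X h0)]

theorem coeff_subst_eq_sum_range {a : MvPowerSeries τ R}
    (ha : MvPowerSeries.constantCoeff a = 0) (f : R⟦X⟧) {e : τ →₀ ℕ} {n : ℕ}
    (he : e.degree ≤ n) :
    MvPowerSeries.coeff e (f.subst a) =
      ∑ k ∈ Finset.range (n + 1), coeff k f * MvPowerSeries.coeff e (a ^ k) := by
  simp_rw [coeff_subst (HasSubst.of_constantCoeff_zero ha), smul_eq_mul]
  refine finsum_eq_sum_of_support_subset _ fun k hk => Finset.mem_range.2 ?_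
  by_contra! hnk
  refine hk (mul_eq_zero_of_right _ (MvPowerSeries.coeff_of_lt_order ?_))
  exact lt_of_lt_of_le (by exact_mod_cast (by omega : e.degree < k))
    (MvPowerSeries.le_order_pow_of_constantCoeff_eq_zero k ha)

theorem coeff_one_subst {g h : R⟦X⟧} (hh : constantCoeff h = 0) :
    coeff 1 (g.subst h) = coeff 1 g * coeff 1 h := by
  change MvPowerSeries.coeff (Finsupp.single () 1) (g.subst h) = _
  rw [coeff_subst_eq_sum_range hh g (n := 1) (by simp), Finset.sum_range_succ,
    Finset.sum_range_one, pow_zero, pow_one, MvPowerSeries.coeff_one, if_neg (by simp),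
    mul_zero, zero_add]
  rfl

theorem coeff_single_add_single_subst {S : MvPowerSeries (Fin 2) R}
    (hS : MvPowerSeries.constantCoeff S = 0) (g : R⟦X⟧) :
    MvPowerSeries.coeff (Finsupp.single 0 1 + Finsupp.single 1 1) (g.subst S) =
      coeff 1 g * MvPowerSeries.coeff (Finsupp.single 0 1 + Finsupp.single 1 1) S +
        2 * coeff 2 g * (MvPowerSeries.coeff (Finsupp.single 0 1) S *
          MvPowerSeries.coeff (Finsupp.single 1 1) S) := by
  rw [coeff_subst_eq_sum_range hS g (n := 2) (by simp), Finset.sum_range_succ,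
    Finset.sum_range_succ, Finset.sum_range_one, pow_zero, pow_one, MvPowerSeries.coeff_one,
    if_neg (by simp), sq, MvPowerSeries.coeff_single_add_single_mul,
    MvPowerSeries.coeff_zero_eq_constantCoeff_apply, hS]
  ring

theorem coeff_pow_eq_ite_of_le_one {h : R⟦X⟧} (h0 : constantCoeff h = 0)
    (h1 : coeff 1 h = 1) {n : ℕ} (hn : n ≤ 1) (k : ℕ) :
    coeff n (h ^ k) = if n = k then 1 else 0 := by
  interval_cases n
  · rw [coeff_zero_eq_constantCoeff_apply, map_pow, h0, zero_pow_eq]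
    simp [eq_comm]
  · rw [coeff_one_pow, h0, h1]
    rcases k with _ | _ | k <;> simp

theorem coeff_subst_X_zero_mul_subst_X_one (p q : R⟦X⟧) (e : Fin 2 →₀ ℕ) :
    MvPowerSeries.coeff e (p.subst (MvPowerSeries.X 0) * q.subst (MvPowerSeries.X 1)) =
      coeff (e 0) p * coeff (e 1) q := by
  classical
  rw [MvPowerSeries.coeff_mul,
    Finset.sum_eq_single (Finsupp.single 0 (e 0), Finsupp.single 1 (e 1))]
  · simp [coeff_subst_single]
  · rintro ⟨u, v⟩ huv hne
    rw [Finset.HasAntidiagonal.mem_antidiagonal] at huv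
    simp only [coeff_subst_single]
    split_ifs with hu hv
    · refine absurd ?_ hne
      simp only [Finsupp.ext_iff, Fin.forall_fin_two] at hu hv
      simp [← huv, Finsupp.ext_iff, Fin.forall_fin_two, hu.2, hv.1]
    all_goals simp
  · intro he
    refine absurd (Finset.HasAntidiagonal.mem_antidiagonal.2 ?_) he
    ext i
    fin_cases i <;> simp

theorem coeff_subst_subst_X_of_le_one (F : MvPowerSeries (Fin 2) R) {h : R⟦X⟧}
    (h0 : constantCoeff h = 0) (h1 : coeff 1 h = 1) {e : Fin 2 →₀ ℕ} (he : ∀ i, e i ≤ 1) :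
    MvPowerSeries.coeff e (MvPowerSeries.subst (fun i => h.subst (MvPowerSeries.X i)) F) =
      MvPowerSeries.coeff e F := by
  have hmonomial (d : Fin 2 →₀ ℕ) : MvPowerSeries.coeff e
      (d.prod fun i n => h.subst (MvPowerSeries.X i : MvPowerSeries (Fin 2) R) ^ n) =
        if d = e then 1 else 0 := by
    rw [Finsupp.prod_fintype _ _ fun _ => pow_zero _, Fin.prod_univ_two,
      ← subst_pow (HasSubst.X (S := R) 0), ← subst_pow (HasSubst.X (S := R) 1),
      coeff_subst_X_zero_mul_subst_X_one, coeff_pow_eq_ite_of_le_one h0 h1 (he 0),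
      coeff_pow_eq_ite_of_le_one h0 h1 (he 1)]
    simp only [ite_zero_mul_ite_zero, mul_one, Finsupp.ext_iff, Fin.forall_fin_two, eq_comm]
  rw [MvPowerSeries.coeff_subst (hasSubst_subst_X h0), finsum_eq_single _ e]
  · rw [hmonomial, if_pos rfl, smul_eq_mul, mul_one]
  · intro d hd
    rw [hmonomial, if_neg hd, smul_zero]

end PowerSeries

theorem stmt2_general {R : Type*} [CommRing R] (F : MvPowerSeries (Fin 2) R)
    (hF0 : MvPowerSeries.coeff 0 F = 0)
    (hFx : MvPowerSeries.coeff (Finsupp.single (0 : Fin 2) 1) F = 1)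
    (hFy : MvPowerSeries.coeff (Finsupp.single (1 : Fin 2) 1) F = 1)
    (g h : PowerSeries R)
    (hh0 : PowerSeries.constantCoeff h = 0)
    (hg1 : PowerSeries.coeff 1 g = 1)
    (hgh : PowerSeries.substitute h g = PowerSeries.X)
    (G : MvPowerSeries (Fin 2) R)
    (hG : G = PowerSeries.substitute
      (MvPowerSeries.substitute
        ![PowerSeries.substitute (MvPowerSeries.X 0) h,
          PowerSeries.substitute (MvPowerSeries.X 1) h] F) g) :
    MvPowerSeries.coeff (Finsupp.single (0 : Fin 2) 1 + Finsupp.single (1 : Fin 2) 1) G =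
      MvPowerSeries.coeff
          (Finsupp.single (0 : Fin 2) 1 + Finsupp.single (1 : Fin 2) 1) F +
        2 * PowerSeries.coeff 2 g := by
  have hh1 : PowerSeries.coeff 1 h = 1 := by
    simpa [PowerSeries.substitute_eq_subst hh0, PowerSeries.coeff_one_subst hh0, hg1] using
      congrArg (PowerSeries.coeff 1) hgh
  set S := MvPowerSeries.subst (fun i => h.subst (MvPowerSeries.X (R := R) i)) F
  have hS {e : Fin 2 →₀ ℕ} (he : ∀ i, e i ≤ 1) :
      MvPowerSeries.coeff e S = MvPowerSeries.coeff e F :=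
    PowerSeries.coeff_subst_subst_X_of_le_one F hh0 hh1 he
  have hS0 : MvPowerSeries.constantCoeff S = 0 := by
    rw [← MvPowerSeries.coeff_zero_eq_constantCoeff_apply, hS (by simp), hF0]
  rw [hG, PowerSeries.substitute_substitute_X_eq_subst F hh0,
    PowerSeries.substitute_eq_subst hS0, PowerSeries.coeff_single_add_single_subst hS0, hg1,
    hS (by simp [Fin.forall_fin_two]),
    hS (e := Finsupp.single 0 1) (by simp [Fin.forall_fin_two]),
    hS (e := Finsupp.single 1 1) (by simp [Fin.forall_fin_two]), hFx, hFy]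
  ring

/-- Let `R` be a commutative ring, `F ∈ R⟦x,y⟧` with zero constant
coefficient, with the coefficients of `x` and `y` both `1`, and with `F(x,0) = x`,
`F(0,y) = y`.  Let `g, h ∈ R⟦z⟧` have zero constant coefficients, the coefficient
of `z` in `g` be `1`, and `g(h(z)) = z`, `h(g(z)) = z`.  Put
`G(x,y) = g(F(h(x), h(y)))`.  Then the coefficient of `x·y` in `G` equals the
coefficient of `x·y` in `F` plus `2` times the coefficient of `z²` in `g`. -/
theorem stmt2 {R : Type*} [CommRing R] (F : MvPowerSeries (Fin 2) R)
    (hF0 : MvPowerSeries.coeff 0 F = 0)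
    (hFx : MvPowerSeries.coeff (Finsupp.single (0 : Fin 2) 1) F = 1)
    (hFy : MvPowerSeries.coeff (Finsupp.single (1 : Fin 2) 1) F = 1)
    (hFx0 : MvPowerSeries.substitute ![MvPowerSeries.X 0, 0] F = MvPowerSeries.X 0)
    (hF0y : MvPowerSeries.substitute ![0, MvPowerSeries.X 1] F = MvPowerSeries.X 1)
    (g h : PowerSeries R)
    (hg0 : PowerSeries.constantCoeff g = 0)
    (hh0 : PowerSeries.constantCoeff h = 0)
    (hg1 : PowerSeries.coeff 1 g = 1)
    (hgh : PowerSeries.substitute h g = PowerSeries.X)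
    (hhg : PowerSeries.substitute g h = PowerSeries.X)
    (G : MvPowerSeries (Fin 2) R)
    (hG : G = PowerSeries.substitute
      (MvPowerSeries.substitute
        ![PowerSeries.substitute (MvPowerSeries.X 0) h,
          PowerSeries.substitute (MvPowerSeries.X 1) h] F) g) :
    MvPowerSeries.coeff (Finsupp.single (0 : Fin 2) 1 + Finsupp.single (1 : Fin 2) 1) G =
      MvPowerSeries.coeff
          (Finsupp.single (0 : Fin 2) 1 + Finsupp.single (1 : Fin 2) 1) F +
        2 * PowerSeries.coeff 2 g :=
  stmt2_general F hF0 hFx hFy g h hh0 hg1 hgh G hG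
end

section
/- Let R be a commutative ring and let F ∈ R⟦x,y⟧ be a formal power series in two variables with zero constant coefficient and with the coefficients of x and of y both equal to 1, and let [n]_F(t) be the associated n-series. Then for every natural number n ≥ 1, the product ∏_{k=1}^{n} [k]_F(t) ∈ R⟦t⟧ has vanishing coefficient of t^j for all j < n, and its coefficient of t^n equals n!·1_R. -/
/-- The `n`-series `[n]_F(t)` of a two-variable formal power series `F ∈ R⟦x,y⟧`,
defined recursively by `[0]_F(t) = 0` and `[n+1]_F(t) = F([n]_F(t), t)`. -/
noncomputable def MvPowerSeries.nSeries {R : Type*} [CommRing R]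
    (F : MvPowerSeries (Fin 2) R) : ℕ → PowerSeries R
  | 0 => 0
  | n + 1 => MvPowerSeries.substitute ![MvPowerSeries.nSeries F n, PowerSeries.X] F

namespace PowerSeries

variable {R : Type*} [CommRing R]

theorem X_pow_dvd_pow_mul_pow {a b : R⟦X⟧} (ha : constantCoeff a = 0)
    (hb : constantCoeff b = 0) (m n : ℕ) :
    X ^ (m + n) ∣ a ^ m * b ^ n := by
  rw [pow_add]
  exact mul_dvd_mul (pow_dvd_pow_of_dvd (X_dvd_iff.2 ha) m)
    (pow_dvd_pow_of_dvd (X_dvd_iff.2 hb) n)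

theorem coeff_prod_of_constantCoeff_eq_zero {ι : Type*} (s : Finset ι) (g : ι → R⟦X⟧)
    (hg : ∀ k ∈ s, constantCoeff (g k) = 0) :
    (∀ j < s.card, coeff j (∏ k ∈ s, g k) = 0) ∧
      coeff s.card (∏ k ∈ s, g k) = ∏ k ∈ s, coeff 1 (g k) := by
  set shift : ι → R⟦X⟧ := fun k => mk fun p => coeff (p + 1) (g k)
  have hprod : ∏ k ∈ s, g k = X ^ s.card * ∏ k ∈ s, shift k := by
    rw [← Finset.prod_const, ← Finset.prod_mul_distrib]
    refine Finset.prod_congr rfl fun k hk => ?_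
    simpa [hg k hk] using eq_X_mul_shift_add_const (g k)
  refine ⟨fun j hj => ?_, ?_⟩
  · rw [hprod, coeff_X_pow_mul', if_neg (by omega)]
  · rw [hprod, coeff_X_pow_mul', if_pos le_rfl, Nat.sub_self, coeff_zero_eq_constantCoeff_apply,
      map_prod]
    simp [shift]

end PowerSeries

namespace MvPowerSeries

variable {R : Type*} [CommRing R]

theorem coeff_substitute_fin_two (a : Fin 2 → PowerSeries R) (F : MvPowerSeries (Fin 2) R)
    (j : ℕ) :
    PowerSeries.coeff j (substitute a F) =
      ∑ᶠ e : Fin 2 →₀ ℕ, coeff e F * PowerSeries.coeff j (a 0 ^ e 0 * a 1 ^ e 1) := by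
  change coeff (Finsupp.single () j) (substitute a F) = _
  rw [coeff_apply]
  refine finsum_congr fun e => ?_
  rw [Finsupp.prod_fintype _ _ fun i => pow_zero (a i), Fin.prod_univ_two]
  rfl

theorem eq_zero_or_eq_single_of_add_le_one {e : Fin 2 →₀ ℕ} (he : e 0 + e 1 ≤ 1) :
    e = 0 ∨ e = Finsupp.single 0 1 ∨ e = Finsupp.single 1 1 := by
  have he' : e = Finsupp.single 0 (e 0) + Finsupp.single 1 (e 1) :=
    Finsupp.ext fun i => by fin_cases i <;> simp
  generalize e 0 = m, e 1 = n at he he'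
  subst he'
  obtain ⟨hm, hn⟩ : m ≤ 1 ∧ n ≤ 1 := by omega
  interval_cases m <;> interval_cases n <;> simp_all

theorem coeff_substitute_fin_two_of_le_one (a : Fin 2 → PowerSeries R)
    (ha : ∀ i, PowerSeries.constantCoeff (a i) = 0) (F : MvPowerSeries (Fin 2) R) {j : ℕ}
    (hj : j ≤ 1) :
    PowerSeries.coeff j (substitute a F) =
      ∑ e ∈ {0, Finsupp.single 0 1, Finsupp.single 1 1},
        coeff e F * PowerSeries.coeff j (a 0 ^ e 0 * a 1 ^ e 1) := by
  rw [coeff_substitute_fin_two]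
  refine finsum_eq_sum_of_support_subset _ fun e he => ?_
  by_contra hnot
  refine he ?_
  have hdeg : j < e 0 + e 1 := by
    by_contra! hle
    exact hnot (by simpa using eq_zero_or_eq_single_of_add_le_one (hle.trans hj))
  obtain ⟨q, hq⟩ := PowerSeries.X_pow_dvd_pow_mul_pow (ha 0) (ha 1) (e 0) (e 1)
  simp only [hq, PowerSeries.coeff_X_pow_mul', if_neg hdeg.not_ge, mul_zero]

theorem constantCoeff_vecCons_X {s : PowerSeries R} (hs : PowerSeries.constantCoeff s = 0)
    (i : Fin 2) : PowerSeries.constantCoeff (![s, PowerSeries.X] i) = 0 := by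
  fin_cases i <;> simp [hs]

section nSeries

variable (F : MvPowerSeries (Fin 2) R)

theorem constantCoeff_nSeries (hF0 : coeff 0 F = 0) (k : ℕ) :
    PowerSeries.constantCoeff (nSeries F k) = 0 := by
  induction k with
  | zero => simp [nSeries]
  | succ k ih =>
    rw [← PowerSeries.coeff_zero_eq_constantCoeff_apply, nSeries,
      coeff_substitute_fin_two_of_le_one _ (constantCoeff_vecCons_X ih) F zero_le_one]
    simp [hF0, ih]

theorem coeff_one_nSeries (hF0 : coeff 0 F = 0) (hFx : coeff (Finsupp.single 0 1) F = 1)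
    (hFy : coeff (Finsupp.single 1 1) F = 1) (k : ℕ) :
    PowerSeries.coeff 1 (nSeries F k) = k := by
  induction k with
  | zero => simp [nSeries]
  | succ k ih =>
    have hxy : (Finsupp.single 0 1 : Fin 2 →₀ ℕ) ≠ Finsupp.single 1 1 := by
      simp [Finsupp.single_left_inj]
    rw [nSeries, coeff_substitute_fin_two_of_le_one _
      (constantCoeff_vecCons_X (constantCoeff_nSeries F hF0 k)) F le_rfl]
    simp [Finset.sum_pair hxy, hFx, hFy, ih]

end nSeries

end MvPowerSeries

theorem stmt5_general {R : Type*} [CommRing R] (F : MvPowerSeries (Fin 2) R)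
    (hF0 : MvPowerSeries.coeff 0 F = 0)
    (hFx : MvPowerSeries.coeff (Finsupp.single (0 : Fin 2) 1) F = 1)
    (hFy : MvPowerSeries.coeff (Finsupp.single (1 : Fin 2) 1) F = 1)
    (n : ℕ) :
    (∀ j < n, PowerSeries.coeff j
        (∏ k ∈ Finset.Icc 1 n, MvPowerSeries.nSeries F k) = 0) ∧
      PowerSeries.coeff n (∏ k ∈ Finset.Icc 1 n, MvPowerSeries.nSeries F k) =
        n.factorial • (1 : R) := by
  have hcard : (Finset.Icc 1 n).card = n := by simp
  obtain ⟨hlow, hlead⟩ := PowerSeries.coeff_prod_of_constantCoeff_eq_zero (Finset.Icc 1 n)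
    (MvPowerSeries.nSeries F) fun k _ => MvPowerSeries.constantCoeff_nSeries F hF0 k
  rw [hcard] at hlow hlead
  refine ⟨hlow, ?_⟩
  rw [hlead, Finset.prod_congr rfl fun k _ => MvPowerSeries.coeff_one_nSeries F hF0 hFx hFy k,
    ← Nat.cast_prod, ← Finset.Ico_add_one_right_eq_Icc, Finset.prod_Ico_id_eq_factorial,
    nsmul_one]

/-- Let `R` be a commutative ring, `F ∈ R⟦x,y⟧` with zero constant
coefficient and coefficients of `x` and `y` both `1`, and `[n]_F` the associated
`n`-series.  Then for every `n ≥ 1`, the product `∏_{k=1}^{n} [k]_F(t)` has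
vanishing coefficient of `t^j` for all `j < n`, and its coefficient of `t^n`
equals `n! • 1_R`. -/
theorem stmt5 {R : Type*} [CommRing R] (F : MvPowerSeries (Fin 2) R)
    (hF0 : MvPowerSeries.coeff 0 F = 0)
    (hFx : MvPowerSeries.coeff (Finsupp.single (0 : Fin 2) 1) F = 1)
    (hFy : MvPowerSeries.coeff (Finsupp.single (1 : Fin 2) 1) F = 1)
    (n : ℕ) (hn : 1 ≤ n) :
    (∀ j < n, PowerSeries.coeff j
        (∏ k ∈ Finset.Icc 1 n, MvPowerSeries.nSeries F k) = 0) ∧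
      PowerSeries.coeff n (∏ k ∈ Finset.Icc 1 n, MvPowerSeries.nSeries F k) =
        n.factorial • (1 : R) :=
  stmt5_general F hF0 hFx hFy n
end
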